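/- Let α̃ = (0)(1 2 … n)(n+1 … 2n) ∈ S_0(2n). The number of pair partitions π ∈ 𝒫₂(n,n) (pairing {1,…,n} with {n+1,…,2n}) such that πα̃ is a product of (0) and n transpositions none of which is (n, 2n) equals n - 1. Explicitly these are π = (1, n+j)(2, n+j-1)⋯(j, n+1)(j+1, 2n)(j+2, 2n-1)⋯(n, n+j+1) for j = 1, …, n-1. -/

import Mathlib

/-!
Write `σ = πα̃`. Since `π` is an involution, `σ² = 1` amounts to `α̃ π α̃ = π`, i.e. to
`α̃ (π (i + 1)) = π i` for `i < n` together with the same relation around both cycles. Hence `π` is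
determined on `{1, …, n}`, and so everywhere, by `π 1 = n + j`; conversely the explicit pairing
`π_j` satisfies the relation for every `j ≤ n`. The condition that `(n, 2n)` is not a cycle of
`σ` reads `σ n = π 1 ≠ 2n`, which rules out `j = n` and leaves `j = 1, …, n - 1`.
-/

open Equiv

namespace PairPartition

variable {n j i : ℕ} {α π : Perm ℕ}

/-- The paper's `π_j = (1, n+j)(2, n+j-1)⋯(j, n+1)(j+1, 2n)⋯(n, n+j+1)`, fixing `0` and
everything above `2n`. -/
def pairing (n j i : ℕ) : ℕ :=
  if 1 ≤ i ∧ i ≤ j then n + j + 1 - i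
  else if j + 1 ≤ i ∧ i ≤ n then 2 * n + j + 1 - i
  else if n + 1 ≤ i ∧ i ≤ n + j then n + j + 1 - i
  else if n + j + 1 ≤ i ∧ i ≤ 2 * n then 2 * n + j + 1 - i
  else i

theorem pairing_involutive (hj : j ≤ n) : Function.Involutive (pairing n j) := by
  intro i
  unfold pairing
  split_ifs <;> omega

theorem pairing_one (hj : 1 ≤ j) : pairing n j 1 = n + j := by
  unfold pairing
  split_ifs <;> omega

theorem pairing_zero : pairing n j 0 = 0 := by
  simp [pairing]

theorem pairing_of_two_mul_lt (hj : j ≤ n) (hi : 2 * n < i) : pairing n j i = i := by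
  unfold pairing
  split_ifs <;> omega

theorem pairing_bounds (hj : j ≤ n) (hi1 : 1 ≤ i) (hi2 : i ≤ 2 * n) :
    1 ≤ pairing n j i ∧ pairing n j i ≤ 2 * n := by
  unfold pairing
  split_ifs <;> omega

theorem pairing_le_iff (hj : j ≤ n) (hi1 : 1 ≤ i) (hi2 : i ≤ 2 * n) :
    pairing n j i ≤ n ↔ n < i := by
  unfold pairing
  split_ifs <;> omega

theorem pairing_of_le (hi1 : 1 ≤ i) (hin : i ≤ n) :
    pairing n j i = if i ≤ j then n + j + 1 - i else 2 * n + j + 1 - i := by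
  unfold pairing
  split_ifs <;> omega

noncomputable def pairingPerm (n j : ℕ) : Perm ℕ :=
  if h : j ≤ n then (pairing_involutive h).toPerm (pairing n j) else 1

theorem coe_pairingPerm (hj : j ≤ n) : ⇑(pairingPerm n j) = pairing n j := by
  rw [pairingPerm, dif_pos hj, Function.Involutive.coe_toPerm]

/-- `α̃ = (0)(1 2 … n)(n+1 … 2n)` on `{0, …, 2n}`. -/
structure IsTwoBlockRotation (n : ℕ) (α : Perm ℕ) : Prop where
  apply_zero : α 0 = 0
  apply_of_lt : ∀ i, 1 ≤ i → i < n → α i = i + 1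
  apply_self : α n = 1
  apply_of_lt_two_mul : ∀ i, n + 1 ≤ i → i < 2 * n → α i = i + 1
  apply_two_mul : α (2 * n) = n + 1

theorem IsTwoBlockRotation.apply_eq (hα : IsTwoBlockRotation n α) (hi1 : 1 ≤ i)
    (hi2 : i ≤ 2 * n) : α i = if i = n then 1 else if i = 2 * n then n + 1 else i + 1 := by
  split_ifs with h h'
  · rw [h, hα.apply_self]
  · rw [h', hα.apply_two_mul]
  · rcases lt_or_gt_of_ne h with hlt | hgt
    · exact hα.apply_of_lt i hi1 hlt
    · exact hα.apply_of_lt_two_mul i hgt (by omega)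

theorem IsTwoBlockRotation.apply_bounds (hα : IsTwoBlockRotation n α) (hi1 : 1 ≤ i)
    (hi2 : i ≤ 2 * n) : 1 ≤ α i ∧ α i ≤ 2 * n := by
  rw [hα.apply_eq hi1 hi2]
  split_ifs <;> omega

theorem IsTwoBlockRotation.apply_le_iff (hα : IsTwoBlockRotation n α) (hi1 : 1 ≤ i)
    (hi2 : i ≤ 2 * n) : α i ≤ n ↔ i ≤ n := by
  rw [hα.apply_eq hi1 hi2]
  split_ifs <;> omega

theorem IsTwoBlockRotation.apply_pairing_apply (hα : IsTwoBlockRotation n α) (hj : j ≤ n)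
    (hi1 : 1 ≤ i) (hi2 : i ≤ 2 * n) : α (pairing n j (α i)) = pairing n j i := by
  obtain ⟨ha1, ha2⟩ := hα.apply_bounds hi1 hi2
  obtain ⟨hp1, hp2⟩ := pairing_bounds hj ha1 ha2
  have hαi := hα.apply_eq hi1 hi2
  rw [hα.apply_eq hp1 hp2]
  generalize hp : pairing n j (α i) = p at hp1 hp2 ⊢
  generalize hq : pairing n j i = q
  generalize α i = a at hαi hp
  unfold pairing at hp hq
  split_ifs at hαi hp hq <;> split_ifs <;> omega

/-- `π ∈ 𝒫₂(n,n)`. -/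
def IsCrossPairing (n : ℕ) (π : Perm ℕ) : Prop :=
  (∀ i, 1 ≤ i → i ≤ n → n + 1 ≤ π i ∧ π i ≤ 2 * n) ∧
  (∀ i, 1 ≤ i → i ≤ 2 * n → π (π i) = i ∧ π i ≠ i) ∧
  (π 0 = 0) ∧ (∀ i, 2 * n < i → π i = i)

/-- `σ` is `(0)` times `n` transpositions of `{1, …, 2n}`, none of them `(n, 2n)`. -/
def IsAdmissibleProduct (n : ℕ) (σ : Perm ℕ) : Prop :=
  σ 0 = 0 ∧ (∀ i, 1 ≤ i → i ≤ 2 * n → σ (σ i) = i ∧ σ i ≠ i) ∧ σ n ≠ 2 * n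

theorem IsCrossPairing.involutive (hπ : IsCrossPairing n π) : Function.Involutive π := by
  obtain ⟨-, hinv, h0, hout⟩ := hπ
  intro x
  rcases Nat.eq_zero_or_pos x with rfl | hx
  · rw [h0, h0]
  · rcases le_or_gt x (2 * n) with hx' | hx'
    · exact (hinv x hx hx').1
    · rw [hout x hx', hout x hx']

theorem mul_apply_mul_apply_eq_iff {X : Type*} {π : Perm X} (hπ : Function.Involutive π)
    (α : Perm X) (x : X) : (π * α) ((π * α) x) = x ↔ α (π (α x)) = π x := by
  simp only [Perm.mul_apply]
  constructor
  · intro h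
    conv_rhs => rw [← h]
    rw [hπ]
  · intro h
    rw [h, hπ]

theorem eqOn_pairing_of_sq (hα : IsTwoBlockRotation n α) (hπ : Function.Involutive π)
    (hσ : ∀ i, 1 ≤ i → i < n → (π * α) ((π * α) i) = i) (hj : j ≤ n)
    (h1 : π 1 = pairing n j 1) : ∀ i, 1 ≤ i → i ≤ n → π i = pairing n j i := by
  intro i hi1 hin
  induction i, hi1 using Nat.le_induction with
  | base => exact h1
  | succ i hi1 ih =>
    have hαi : α i = i + 1 := hα.apply_of_lt i hi1 (by omega)
    have hπ_step := (mul_apply_mul_apply_eq_iff hπ α i).1 (hσ i hi1 (by omega))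
    have hpairing_step := hα.apply_pairing_apply hj hi1 (by omega : i ≤ 2 * n)
    rw [hαi] at hπ_step hpairing_step
    apply α.injective
    rw [hπ_step, hpairing_step, ih (by omega)]

theorem coe_eq_pairing_of_eqOn (hj : j ≤ n) (h0 : π 0 = 0) (hout : ∀ i, 2 * n < i → π i = i)
    (hinv : ∀ i, 1 ≤ i → i ≤ n → π (π i) = i)
    (hfirst : ∀ i, 1 ≤ i → i ≤ n → π i = pairing n j i) : ⇑π = pairing n j := by
  funext i
  rcases Nat.eq_zero_or_pos i with rfl | hi1
  · rw [h0, pairing_zero]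
  rcases le_or_gt i n with hin | hni
  · exact hfirst i hi1 hin
  rcases le_or_gt i (2 * n) with hi2 | hi2
  · set k := pairing n j i with hk
    have hk1 : 1 ≤ k := (pairing_bounds hj hi1 hi2).1
    have hkn : k ≤ n := (pairing_le_iff hj hi1 hi2).2 hni
    have hπk : π k = i := by rw [hfirst k hk1 hkn, hk, pairing_involutive hj]
    rw [← hπk, hinv k hk1 hkn]
  · rw [hout i hi2, pairing_of_two_mul_lt hj hi2]

theorem exists_coe_eq_pairing (hn : 1 ≤ n) (hα : IsTwoBlockRotation n α)
    (hπ : IsCrossPairing n π) (hσ : IsAdmissibleProduct n (π * α)) :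
    ∃ j, 1 ≤ j ∧ j ≤ n - 1 ∧ ⇑π = pairing n j := by
  obtain ⟨hπ1_lo, hπ1_hi⟩ := hπ.1 1 le_rfl hn
  have hπ1_eq : π 1 = pairing n (π 1 - n) 1 := by rw [pairing_one (by omega)]; omega
  have hfirst := eqOn_pairing_of_sq hα hπ.involutive
    (fun i hi1 hin => (hσ.2.1 i hi1 (by omega)).1) (by omega) hπ1_eq
  have hσn : (π * α) n = π 1 := by rw [Perm.mul_apply, hα.apply_self]
  have hne := hσ.2.2
  refine ⟨π 1 - n, by omega, by omega, ?_⟩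
  exact coe_eq_pairing_of_eqOn (by omega) hπ.2.2.1 hπ.2.2.2
    (fun i hi1 hin => (hπ.2.1 i hi1 (by omega)).1) hfirst

theorem isCrossPairing_of_coe_eq (hj : j ≤ n) (h : ⇑π = pairing n j) : IsCrossPairing n π := by
  refine ⟨fun i hi1 hin => ?_, fun i hi1 hi2 => ⟨?_, ?_⟩, ?_, fun i hi => ?_⟩
  · have := pairing_le_iff hj hi1 (by omega : i ≤ 2 * n)
    have := pairing_bounds hj hi1 (by omega : i ≤ 2 * n)
    rw [h]
    omega
  · rw [h, pairing_involutive hj]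
  · have := pairing_le_iff hj hi1 hi2
    rw [h]
    omega
  · rw [h, pairing_zero]
  · rw [h, pairing_of_two_mul_lt hj hi]

theorem isAdmissibleProduct_of_coe_eq (hα : IsTwoBlockRotation n α) (hj1 : 1 ≤ j) (hjn : j < n)
    (h : ⇑π = pairing n j) : IsAdmissibleProduct n (π * α) := by
  have hπ : Function.Involutive π := by rw [h]; exact pairing_involutive hjn.le
  refine ⟨?_, fun i hi1 hi2 => ⟨?_, ?_⟩, ?_⟩
  · rw [Perm.mul_apply, hα.apply_zero, h, pairing_zero]
  · rw [mul_apply_mul_apply_eq_iff hπ, h]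
    exact hα.apply_pairing_apply hjn.le hi1 hi2
  · -- `α̃` preserves the two blocks and `π` swaps them
    have hαi := hα.apply_le_iff hi1 hi2
    have hαi_bounds := hα.apply_bounds hi1 hi2
    have := pairing_le_iff (j := j) hjn.le hαi_bounds.1 hαi_bounds.2
    rw [Perm.mul_apply, h]
    omega
  · rw [Perm.mul_apply, hα.apply_self, h, pairing_one hj1]
    omega

theorem isCrossPairing_and_isAdmissibleProduct_iff (hn : 1 ≤ n) (hα : IsTwoBlockRotation n α) :
    IsCrossPairing n π ∧ IsAdmissibleProduct n (π * α) ↔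
      ∃ j, 1 ≤ j ∧ j ≤ n - 1 ∧ ⇑π = pairing n j := by
  constructor
  · exact fun ⟨hπ, hσ⟩ => exists_coe_eq_pairing hn hα hπ hσ
  · rintro ⟨j, hj1, hjn, h⟩
    exact ⟨isCrossPairing_of_coe_eq (by omega) h, isAdmissibleProduct_of_coe_eq hα hj1 (by omega) h⟩

theorem coe_eq_pairing_iff (hj : j ≤ n) :
    ((∀ i, 1 ≤ i → i ≤ j → π i = n + j + 1 - i) ∧
      (∀ i, j + 1 ≤ i → i ≤ n → π i = 2 * n + j + 1 - i) ∧
      (π 0 = 0) ∧ (∀ i, 2 * n < i → π i = i) ∧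
      (∀ i, 1 ≤ i → i ≤ 2 * n → π (π i) = i)) ↔ ⇑π = pairing n j := by
  constructor
  · rintro ⟨hlow, hhigh, h0, hout, hinv⟩
    refine coe_eq_pairing_of_eqOn hj h0 hout (fun i hi1 hin => hinv i hi1 (by omega)) ?_
    intro i hi1 hin
    rw [pairing_of_le hi1 hin]
    split_ifs with hij
    · exact hlow i hi1 hij
    · exact hhigh i (by omega) hin
  · intro h
    have hπ := isCrossPairing_of_coe_eq hj h
    refine ⟨fun i hi1 hij => ?_, fun i hi1 hin => ?_, hπ.2.2.1, hπ.2.2.2,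
      fun i hi1 hi2 => hπ.involutive i⟩
    · rw [h, pairing_of_le hi1 (by omega), if_pos hij]
    · rw [h, pairing_of_le (by omega) hin, if_neg (by omega)]

theorem ncard_setOf_coe_eq_pairing (n : ℕ) :
    {π : Perm ℕ | ∃ j, 1 ≤ j ∧ j ≤ n - 1 ∧ ⇑π = pairing n j}.ncard = n - 1 := by
  have himage : {π : Perm ℕ | ∃ j, 1 ≤ j ∧ j ≤ n - 1 ∧ ⇑π = pairing n j} =
      pairingPerm n '' Set.Icc 1 (n - 1) := by
    ext π
    simp only [Set.mem_ofPred_eq, Set.mem_image, Set.mem_Icc]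
    constructor
    · rintro ⟨j, hj1, hjn, h⟩
      exact ⟨j, ⟨hj1, hjn⟩, DFunLike.coe_injective (by rw [coe_pairingPerm (by omega), h])⟩
    · rintro ⟨j, ⟨hj1, hjn⟩, rfl⟩
      exact ⟨j, hj1, hjn, coe_pairingPerm (by omega)⟩
  have hinj : Set.InjOn (pairingPerm n) (Set.Icc 1 (n - 1)) := by
    intro a ⟨ha1, han⟩ b ⟨hb1, hbn⟩ hab
    have h1 := congrArg (· 1) hab
    simp only [coe_pairingPerm (by omega : a ≤ n), coe_pairingPerm (by omega : b ≤ n),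
      pairing_one ha1, pairing_one hb1] at h1
    omega
  rw [himage, hinj.ncard_image, ← Finset.coe_Icc, Set.ncard_coe_finset,
    Nat.card_Icc]
  omega

end PairPartition

open PairPartition in
theorem stmt12_general (n : ℕ) (hn : 1 ≤ n) (α : Equiv.Perm ℕ)
    (hα0 : α 0 = 0)
    (hα1 : ∀ i, 1 ≤ i → i < n → α i = i + 1) (hαn : α n = 1)
    (hα2 : ∀ i, n + 1 ≤ i → i < 2 * n → α i = i + 1) (hα2n : α (2 * n) = n + 1) :
    Set.ncard {π : Equiv.Perm ℕ |
      ((∀ i, 1 ≤ i → i ≤ n → n + 1 ≤ π i ∧ π i ≤ 2 * n) ∧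
       (∀ i, 1 ≤ i → i ≤ 2 * n → π (π i) = i ∧ π i ≠ i) ∧
       (π 0 = 0) ∧ (∀ i, 2 * n < i → π i = i)) ∧
      ((π * α) 0 = 0 ∧
       (∀ i, 1 ≤ i → i ≤ 2 * n → (π * α) ((π * α) i) = i ∧ (π * α) i ≠ i) ∧
       (π * α) n ≠ 2 * n)} = n - 1 ∧
    ∀ π : Equiv.Perm ℕ,
      (π ∈ {π : Equiv.Perm ℕ |
        ((∀ i, 1 ≤ i → i ≤ n → n + 1 ≤ π i ∧ π i ≤ 2 * n) ∧
         (∀ i, 1 ≤ i → i ≤ 2 * n → π (π i) = i ∧ π i ≠ i) ∧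
         (π 0 = 0) ∧ (∀ i, 2 * n < i → π i = i)) ∧
        ((π * α) 0 = 0 ∧
         (∀ i, 1 ≤ i → i ≤ 2 * n → (π * α) ((π * α) i) = i ∧ (π * α) i ≠ i) ∧
         (π * α) n ≠ 2 * n)}) ↔
      (∃ j, 1 ≤ j ∧ j ≤ n - 1 ∧
        (∀ i, 1 ≤ i → i ≤ j → π i = n + j + 1 - i) ∧
        (∀ i, j + 1 ≤ i → i ≤ n → π i = 2 * n + j + 1 - i) ∧
        (π 0 = 0) ∧ (∀ i, 2 * n < i → π i = i) ∧
        (∀ i, 1 ≤ i → i ≤ 2 * n → π (π i) = i)) := by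
  have hα : IsTwoBlockRotation n α := ⟨hα0, hα1, hαn, hα2, hα2n⟩
  have hmem (π : Equiv.Perm ℕ) : IsCrossPairing n π ∧ IsAdmissibleProduct n (π * α) ↔
      ∃ j, 1 ≤ j ∧ j ≤ n - 1 ∧ ⇑π = pairing n j :=
    isCrossPairing_and_isAdmissibleProduct_iff hn hα
  refine ⟨?_, fun π => (hmem π).trans ?_⟩
  · rw [← ncard_setOf_coe_eq_pairing n]
    exact congrArg Set.ncard (Set.ext hmem)
  · exact exists_congr fun j => and_congr_right fun _ => and_congr_right fun hjn =>
      (coe_eq_pairing_iff (by omega)).symm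

/-- With `α̃ = (0)(1 2 … n)(n+1 … 2n)` as a permutation of ℕ, the set of
pair partitions `π ∈ 𝒫₂(n,n)` such that `πα̃` is the fixed point `0` together with `n`
transpositions none of which is `(n, 2n)` has exactly `n - 1` elements; explicitly these
are `π = (1,n+j)(2,n+j-1)⋯(j,n+1)(j+1,2n)(j+2,2n-1)⋯(n,n+j+1)` for `j = 1,…,n-1`. -/
theorem stmt12 (n : ℕ) (hn : 1 ≤ n) (α : Equiv.Perm ℕ)
    (hα0 : α 0 = 0)
    (hα1 : ∀ i, 1 ≤ i → i < n → α i = i + 1) (hαn : α n = 1)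
    (hα2 : ∀ i, n + 1 ≤ i → i < 2 * n → α i = i + 1) (hα2n : α (2 * n) = n + 1)
    (hαout : ∀ i, 2 * n < i → α i = i) :
    Set.ncard {π : Equiv.Perm ℕ |
      ((∀ i, 1 ≤ i → i ≤ n → n + 1 ≤ π i ∧ π i ≤ 2 * n) ∧
       (∀ i, 1 ≤ i → i ≤ 2 * n → π (π i) = i ∧ π i ≠ i) ∧
       (π 0 = 0) ∧ (∀ i, 2 * n < i → π i = i)) ∧
      ((π * α) 0 = 0 ∧
       (∀ i, 1 ≤ i → i ≤ 2 * n → (π * α) ((π * α) i) = i ∧ (π * α) i ≠ i) ∧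
       (π * α) n ≠ 2 * n)} = n - 1 ∧
    ∀ π : Equiv.Perm ℕ,
      (π ∈ {π : Equiv.Perm ℕ |
        ((∀ i, 1 ≤ i → i ≤ n → n + 1 ≤ π i ∧ π i ≤ 2 * n) ∧
         (∀ i, 1 ≤ i → i ≤ 2 * n → π (π i) = i ∧ π i ≠ i) ∧
         (π 0 = 0) ∧ (∀ i, 2 * n < i → π i = i)) ∧
        ((π * α) 0 = 0 ∧
         (∀ i, 1 ≤ i → i ≤ 2 * n → (π * α) ((π * α) i) = i ∧ (π * α) i ≠ i) ∧
         (π * α) n ≠ 2 * n)}) ↔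
      (∃ j, 1 ≤ j ∧ j ≤ n - 1 ∧
        (∀ i, 1 ≤ i → i ≤ j → π i = n + j + 1 - i) ∧
        (∀ i, j + 1 ≤ i → i ≤ n → π i = 2 * n + j + 1 - i) ∧
        (π 0 = 0) ∧ (∀ i, 2 * n < i → π i = i) ∧
        (∀ i, 1 ≤ i → i ≤ 2 * n → π (π i) = i)) :=
  stmt12_general n hn α hα0 hα1 hαn hα2 hα2n
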